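/- arXiv:1707.09349 — 7 statements merged into one kernel-verified Lean document; each statement's English description precedes it below -/
import Mathlib

section
/- Let k be a positive integer and let D be a k-out-regular digraph containing no even directed cycle. Then for every 2-partition (V₁,V₂) of V(D), some vertex has all its k out-neighbours in the same part as itself; consequently max{Δ⁺(D⟨V₁⟩), Δ⁺(D⟨V₂⟩)} = Δ⁺(D) = k. -/
/-- The number of out-neighbours of `v` lying in `S`, i.e. the out-degree of `v` in the
subdigraph induced by `S` (when `v ∈ S`). -/
noncomputable def outDegOn {V : Type*} (A : V → V → Prop) (S : Set V) (v : V) : ℕ :=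
  {w | w ∈ S ∧ A v w}.ncard

/-- The out-degree `d⁺_D(v)` of `v` in the digraph with arc relation `A`. -/
noncomputable def outDeg {V : Type*} (A : V → V → Prop) (v : V) : ℕ :=
  {w | A v w}.ncard

/-- The maximum out-degree `Δ⁺(D⟨S⟩)` of the subdigraph induced by `S`. -/
noncomputable def maxOutDegOn {V : Type*} (A : V → V → Prop) (S : Set V) : ℕ :=
  sSup ((fun v => outDegOn A S v) '' S)

/-- The maximum out-degree `Δ⁺(D)`. -/
noncomputable def maxOutDeg {V : Type*} (A : V → V → Prop) : ℕ :=
  sSup (Set.range (outDeg A))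

/-- The digraph contains an even directed cycle. -/
def HasEvenCycle {V : Type*} (A : V → V → Prop) : Prop :=
  ∃ n : ℕ, 2 ≤ n ∧ Even n ∧ ∃ f : ZMod n → V,
    Function.Injective f ∧ ∀ i, A (f i) (f (i + 1))

/-- Let `k` be a positive integer and `D` a `k`-out-regular digraph with
no even directed cycle. Then for every 2-partition `(V₁, V₂)` of `V(D)` some vertex has
all its `k` out-neighbours in the same part as itself; consequently
`max {Δ⁺(D⟨V₁⟩), Δ⁺(D⟨V₂⟩)} = Δ⁺(D) = k`. -/
theorem stmt3 {V : Type*} [Fintype V] [Nonempty V] (k : ℕ) (hk : 0 < k)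
    (A : V → V → Prop) (hirr : ∀ v, ¬ A v v)
    (hreg : ∀ v, outDeg A v = k)
    (hnoeven : ¬ HasEvenCycle A)
    (V₁ V₂ : Set V) (hdisj : Disjoint V₁ V₂) (hcov : V₁ ∪ V₂ = Set.univ) :
    (∃ v, (v ∈ V₁ ∧ ∀ w, A v w → w ∈ V₁) ∨ (v ∈ V₂ ∧ ∀ w, A v w → w ∈ V₂)) ∧
    max (maxOutDegOn A V₁) (maxOutDegOn A V₂) = maxOutDeg A ∧
    maxOutDeg A = k := by
  classical
  have hmem : ∀ v : V, v ∈ V₁ ∨ v ∈ V₂ := by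
    intro v
    have : v ∈ V₁ ∪ V₂ := by rw [hcov]; trivial
    exact this
  have key : ∃ v, (v ∈ V₁ ∧ ∀ w, A v w → w ∈ V₁) ∨ (v ∈ V₂ ∧ ∀ w, A v w → w ∈ V₂) := by
    by_contra hcon
    push_neg at hcon
    set b : V → Bool := fun v => decide (v ∈ V₁) with hb
    have hf : ∀ v, ∃ w, A v w ∧ b w = !b v := by
      intro v
      rcases hmem v with h1 | h2
      · obtain ⟨w, hw, hw1⟩ := (hcon v).1 h1
        exact ⟨w, hw, by simp [hb, h1, hw1]⟩
      · have hv1 : v ∉ V₁ := fun h => (Set.disjoint_left.mp hdisj h) h2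
        obtain ⟨w, hw, hw2⟩ := (hcon v).2 h2
        have hwv1 : w ∈ V₁ := (hmem w).resolve_right hw2
        exact ⟨w, hw, by simp [hb, hwv1, hv1]⟩
    choose f hfA hfb using hf
    obtain ⟨x⟩ := ‹Nonempty V›
    obtain ⟨i, j, hij, hfix⟩ := Finite.exists_ne_map_eq_of_infinite (fun n : ℕ => f^[n] x)
    have hfix : f^[i] x = f^[j] x := hfix
    have hcyc : ∃ y : V, ∃ m, 0 < m ∧ f^[m] y = y := by
      rcases Nat.lt_or_ge i j with h | h
      · refine ⟨f^[i] x, j - i, by omega, ?_⟩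
        rw [← Function.iterate_add_apply, Nat.sub_add_cancel h.le, ← hfix]
      · have h' : j < i := lt_of_le_of_ne h (Ne.symm hij)
        refine ⟨f^[j] x, i - j, by omega, ?_⟩
        rw [← Function.iterate_add_apply, Nat.sub_add_cancel h'.le, hfix]
    obtain ⟨v, hexn⟩ := hcyc
    set n := Nat.find hexn with hn
    obtain ⟨hnpos, hnfix⟩ := Nat.find_spec hexn
    have hmin : ∀ m, 0 < m → m < n → f^[m] v ≠ v := by
      intro m h1 h2 h3
      exact Nat.find_min hexn h2 ⟨h1, h3⟩
    have hpar : ∀ m, b (f^[m] v) = if m % 2 = 0 then b v else !b v := by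
      intro m
      induction m with
      | zero => simp
      | succ m ih =>
        rw [Function.iterate_succ_apply', hfb, ih]
        rcases Nat.even_or_odd m with h | h
        · have h0 : m % 2 = 0 := Nat.even_iff.mp h
          have h1 : (m + 1) % 2 = 1 := by omega
          simp [h0, h1]
        · have h0 : m % 2 = 1 := Nat.odd_iff.mp h
          have h1 : (m + 1) % 2 = 0 := by omega
          simp [h0, h1]
    have hne1 : n ≠ 1 := by
      intro h1
      have : f v = v := by
        have := hnfix
        rw [← hn, h1] at this
        simpa using this
      have hbv := hfb v
      rw [this] at hbv
      simp at hbv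
    have hn2 : 2 ≤ n := by omega
    have hneven : Even n := by
      rcases Nat.even_or_odd n with h | h
      · exact h
      · exfalso
        have h0 : n % 2 = 1 := Nat.odd_iff.mp h
        have := hpar n
        rw [hnfix, h0] at this
        simp at this
    haveI : NeZero n := ⟨by omega⟩
    haveI : Fact (1 < n) := ⟨by omega⟩
    have hinj' : ∀ a b', a < b' → b' < n → f^[a] v ≠ f^[b'] v := by
      intro a b' hab hbn heq
      have h1 : f^[(n - b') + a] v = v := by
        rw [Function.iterate_add_apply, heq, ← Function.iterate_add_apply,
          Nat.sub_add_cancel hbn.le, hnfix]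
      exact hmin _ (by omega) (by omega) h1
    apply hnoeven
    refine ⟨n, hn2, hneven, fun i => f^[i.val] v, ?_, ?_⟩
    · intro i j hgij
      simp only at hgij
      have hi := ZMod.val_lt i
      have hj := ZMod.val_lt j
      have hv : i.val = j.val := by
        by_contra hne
        rcases Nat.lt_or_ge i.val j.val with h | h
        · exact hinj' _ _ h hj hgij
        · exact hinj' _ _ (lt_of_le_of_ne h fun e => hne e.symm) hi hgij.symm
      have : ((i.val : ℕ) : ZMod n) = ((j.val : ℕ) : ZMod n) := by rw [hv]
      rwa [ZMod.natCast_val, ZMod.natCast_val, ZMod.cast_id, ZMod.cast_id] at this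
    · intro i
      have hv1 : (i + 1).val = (i.val + 1) % n := by
        rw [ZMod.val_add, ZMod.val_one]
      have hstep : f^[(i+1).val] v = f (f^[i.val] v) := by
        rcases Nat.lt_or_ge (i.val + 1) n with h | h
        · rw [hv1, Nat.mod_eq_of_lt h, Function.iterate_succ_apply']
        · have hilt := ZMod.val_lt i
          have hie : i.val + 1 = n := by omega
          have h0 : (i+1).val = 0 := by rw [hv1, hie]; simp
          rw [h0]
          have h2 : f (f^[i.val] v) = f^[i.val + 1] v :=
            (Function.iterate_succ_apply' f _ v).symm
          rw [h2, hie]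
          exact hnfix.symm
      show A (f^[i.val] v) (f^[(i+1).val] v)
      rw [hstep]
      exact hfA _
  obtain ⟨v0, hv0⟩ := key
  have hbdOn : ∀ (S : Set V) (w : V), outDegOn A S w ≤ k := by
    intro S w
    rw [← hreg w]
    exact Set.ncard_le_ncard (fun x hx => hx.2) (Set.toFinite _)
  have hmaxOn_le : ∀ S : Set V, maxOutDegOn A S ≤ k := by
    intro S
    apply csSup_le'
    rintro x ⟨w, hw, rfl⟩
    exact hbdOn S w
  have hmaxdeg : maxOutDeg A = k := by
    apply le_antisymm
    · apply csSup_le'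
      rintro x ⟨w, rfl⟩
      exact (hreg w).le
    · obtain ⟨w⟩ := ‹Nonempty V›
      exact le_csSup ⟨k, by rintro x ⟨u, rfl⟩; exact (hreg u).le⟩ ⟨w, hreg w⟩
  have hfull : ∀ (S : Set V) (w : V), w ∈ S → (∀ u, A w u → u ∈ S) →
      maxOutDegOn A S = k := by
    intro S w hwS hall
    apply le_antisymm (hmaxOn_le S)
    have heq : outDegOn A S w = k := by
      rw [← hreg w]
      unfold outDegOn outDeg
      congr 1
      ext u
      exact ⟨fun h => h.2, fun h => ⟨hall u h, h⟩⟩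
    exact le_csSup ⟨k, by rintro x ⟨u, hu, rfl⟩; exact hbdOn S u⟩ ⟨w, hwS, heq⟩
  refine ⟨⟨v0, hv0⟩, ?_, hmaxdeg⟩
  rw [hmaxdeg]
  rcases hv0 with ⟨h1, h2⟩ | ⟨h1, h2⟩
  · rw [hfull V₁ v0 h1 h2]
    exact max_eq_left (hmaxOn_le V₂)
  · rw [hfull V₂ v0 h1 h2]
    exact max_eq_right (hmaxOn_le V₁)
end

section
/- For every positive integer k there exists a finite strongly connected k-out-regular digraph that contains no even directed cycle. -/
open Function Relation

theorem HasEvenCycle.of_comap {V W : Type*} {A : V → V → Prop} {e : W → V} (he : Injective e)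
    (h : HasEvenCycle fun a b => A (e a) (e b)) : HasEvenCycle A := by
  obtain ⟨n, hn, hn_even, f, hf_inj, hf_arc⟩ := h
  exact ⟨n, hn, hn_even, e ∘ f, he.comp hf_inj, hf_arc⟩

/-- Unrolling a cycle from a vertex minimising `φ` gives an infinite walk in which every
repetition has period divisible by the (even) length of the cycle. -/
theorem not_hasEvenCycle_of_exists_odd_return {V : Type*} {A : V → V → Prop} (φ : V → ℕ)
    (h : ∀ x : ℕ → V, (∀ m, A (x m) (x (m + 1))) → (∀ m, φ (x 0) ≤ φ (x m)) →
      ∃ a b, Odd b ∧ x (a + b) = x a) :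
    ¬ HasEvenCycle A := by
  rintro ⟨n, hn, hn_even, f, hf_inj, hf_arc⟩
  have : NeZero n := ⟨by omega⟩
  obtain ⟨i, hi⟩ := Finite.exists_min (φ ∘ f)
  obtain ⟨a, b, hb, hab⟩ := h (fun m => f (i + m))
    (fun m => by simpa [add_assoc] using hf_arc (i + m)) (fun m => by simpa using hi (i + m))
  have hnb : n ∣ b := by
    rw [← ZMod.natCast_eq_zero_iff]
    simpa using hf_inj hab
  exact Nat.not_even_iff_odd.mpr hb (even_iff_two_dvd.mpr (hn_even.two_dvd.trans hnb))

namespace LeafJumpTree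

variable {k : ℕ}

abbrev Node (k : ℕ) := {l : List (Fin k) // l.length ≤ 2 * k}

instance : Finite (Node k) := (List.finite_length_le _ _).to_subtype

def root (k : ℕ) : Node k := ⟨[], Nat.zero_le _⟩

def next (u : Node k) (a : Fin k) : Node k :=
  if h : u.1.length < 2 * k then ⟨u.1 ++ [a], by simpa using h⟩
  else ⟨u.1.take (2 * a), (List.length_take_le _ _).trans (by omega)⟩

def Arc (k : ℕ) (u v : Node k) : Prop := ∃ a, next u a = v

lemma next_val_of_lt {u : Node k} (h : u.1.length < 2 * k) (a : Fin k) :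
    (next u a).1 = u.1 ++ [a] := by
  simp [next, h]

lemma next_val_of_not_lt {u : Node k} (h : ¬ u.1.length < 2 * k) (a : Fin k) :
    (next u a).1 = u.1.take (2 * a) := by
  simp [next, h]

lemma next_injective (u : Node k) : Injective (next u) := by
  intro a b hab
  have hval := congrArg Subtype.val hab
  by_cases hu : u.1.length < 2 * k
  · simpa [next_val_of_lt hu] using hval
  · have := congrArg List.length hval
    simp only [next_val_of_not_lt hu, List.length_take] at this
    exact Fin.ext (by omega)

lemma next_ne (u : Node k) (a : Fin k) : next u a ≠ u := by
  intro h
  have := congrArg (fun v : Node k => v.1.length) h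
  by_cases hu : u.1.length < 2 * k
  · simp [next_val_of_lt hu] at this
  · simp only [next_val_of_not_lt hu, List.length_take] at this
    omega

lemma arc_irrefl (u : Node k) : ¬ Arc k u u := fun ⟨a, ha⟩ => next_ne u a ha

lemma ncard_setOf_arc (u : Node k) : {v | Arc k u v}.ncard = k := by
  rw [show {v | Arc k u v} = Set.range (next u) from rfl,
    Set.ncard_range_of_injective (next_injective u), Nat.card_fin]

lemma reflTransGen_arc_append (u : Node k) (l : List (Fin k)) (h : (u.1 ++ l).length ≤ 2 * k) :
    ReflTransGen (Arc k) u ⟨u.1 ++ l, h⟩ := by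
  induction l generalizing u with
  | nil => simp [ReflTransGen.refl]
  | cons a l ih =>
    have hu : u.1.length < 2 * k := by simp at h; omega
    have hnext := next_val_of_lt hu a
    refine .head ⟨a, rfl⟩ ?_
    convert ih (next u a) (by simpa [hnext] using h) using 2
    simp [hnext]

lemma reflTransGen_arc (hk : 0 < k) (u v : Node k) : ReflTransGen (Arc k) u v := by
  have hleaf : (u.1 ++ List.replicate (2 * k - u.1.length) (⟨0, hk⟩ : Fin k)).length ≤ 2 * k := by
    simp; omega
  have hdown := reflTransGen_arc_append u _ hleaf
  have hjump : Arc k (⟨_, hleaf⟩ : Node k) (root k) :=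
    ⟨⟨0, hk⟩, Subtype.ext (by rw [next_val_of_not_lt (by simp; omega)]; simp [root])⟩
  exact (hdown.tail hjump).trans (reflTransGen_arc_append (root k) v.1 v.2)

variable {x : ℕ → Node k}

lemma walk_descends (hx : ∀ m, Arc k (x m) (x (m + 1))) {m : ℕ}
    (hm : (x 0).1.length + m ≤ 2 * k) :
    (x m).1.length = (x 0).1.length + m ∧ ∀ l ≤ m, (x l).1 <+: (x m).1 := by
  induction m with
  | zero => exact ⟨rfl, fun l hl => by simp [Nat.le_zero.mp hl]⟩
  | succ m ih =>
    obtain ⟨hlen, hpre⟩ := ih (by omega)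
    obtain ⟨a, ha⟩ := hx m
    have hstep : (x (m + 1)).1 = (x m).1 ++ [a] := by rw [← ha, next_val_of_lt (by omega)]
    refine ⟨by simp [hstep, hlen]; omega, fun l hl => ?_⟩
    rcases (by omega : l ≤ m ∨ l = m + 1) with hl | rfl
    · exact (hpre l hl).trans (hstep ▸ List.prefix_append _ _)
    · exact List.prefix_refl _

lemma walk_exists_odd_return (hx : ∀ m, Arc k (x m) (x (m + 1)))
    (hmin : ∀ m, (x 0).1.length ≤ (x m).1.length) : ∃ a b, Odd b ∧ x (a + b) = x a := by
  set d := (x 0).1.length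
  have hd : d ≤ 2 * k := (x 0).2
  obtain ⟨hleaf, hpre⟩ := walk_descends hx (m := 2 * k - d) (by omega)
  obtain ⟨j, hj⟩ := hx (2 * k - d)
  have hjump : (x (2 * k - d + 1)).1 = (x (2 * k - d)).1.take (2 * j) := by
    rw [← hj, next_val_of_not_lt (by omega)]
  have hjk : (j : ℕ) < k := j.2
  have hdj : d ≤ 2 * j := by
    have := hmin (2 * k - d + 1)
    rw [hjump, List.length_take] at this
    omega
  have hprefix : (x (2 * j - d)).1 = (x (2 * k - d)).1.take (2 * j) := by
    rw [List.prefix_iff_eq_take.mp (hpre (2 * j - d) (by omega)), (walk_descends hx (by omega)).1]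
    congr 1
    omega
  refine ⟨2 * j - d, 2 * (k - j) + 1, odd_two_mul_add_one _, Subtype.ext ?_⟩
  rw [show 2 * j - d + (2 * (k - j) + 1) = 2 * k - d + 1 by omega, hjump, hprefix]

lemma not_hasEvenCycle_arc : ¬ HasEvenCycle (Arc k) :=
  not_hasEvenCycle_of_exists_odd_return (fun v => v.1.length) fun _ => walk_exists_odd_return

end LeafJumpTree

/-- For every positive integer `k` there exists a finite strongly
connected `k`-out-regular digraph containing no even directed cycle. -/
theorem stmt4 (k : ℕ) (hk : 0 < k) :
    ∃ (N : ℕ) (A : Fin N → Fin N → Prop),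
      0 < N ∧
      (∀ v, ¬ A v v) ∧
      (∀ v : Fin N, {w | A v w}.ncard = k) ∧
      (∀ u v : Fin N, Relation.ReflTransGen A u v) ∧
      ¬ HasEvenCycle A := by
  open LeafJumpTree in
  obtain ⟨N, ⟨e⟩⟩ := Finite.exists_equiv_fin (Node k)
  refine ⟨N, fun a b => Arc k (e.symm a) (e.symm b), (e (root k)).pos,
    fun v => arc_irrefl _, fun v => ?_, fun u v => ?_,
    fun h => not_hasEvenCycle_arc (h.of_comap e.symm.injective)⟩
  · exact (Set.ncard_preimage_of_injective_subset_range e.symm.injective (by simp)).trans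
      (ncard_setOf_arc (e.symm v))
  · simpa [onFun] using ReflTransGen.lift (p := fun a b => Arc k (e.symm a) (e.symm b)) e
      (fun a b h => by simpa [onFun] using h) _ _ (reflTransGen_arc hk (e.symm u) (e.symm v))
end

section
/- A digraph D admits a 1-all-out-degree-reducing 2-partition if and only if every non-trivial terminal strong component of D contains an even directed cycle. -/
/-- The strong component containing `v`: all vertices `w` such that `v` and `w` are
mutually reachable by directed paths. -/
def strongComp {V : Type*} (A : V → V → Prop) (v : V) : Set V :=
  {w | Relation.ReflTransGen A v w ∧ Relation.ReflTransGen A w v}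

/-- `S` is a terminal strong component of the digraph: it is a strong component and no
arc of the digraph leaves it. -/
def IsTerminalSC {V : Type*} (A : V → V → Prop) (S : Set V) : Prop :=
  (∃ v, S = strongComp A v) ∧ ∀ u ∈ S, ∀ w, A u w → w ∈ S

/-- The set `S` contains an even directed cycle (a cyclic sequence of `n ≥ 2`, `n` even,
distinct vertices of `S` with all consecutive arcs present). -/
def HasEvenCycleIn {V : Type*} (A : V → V → Prop) (S : Set V) : Prop :=
  ∃ n : ℕ, 2 ≤ n ∧ Even n ∧ ∃ f : ZMod n → V,
    Function.Injective f ∧ (∀ i, f i ∈ S) ∧ ∀ i, A (f i) (f (i + 1))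

section

open Function Set Relation

variable {V : Type*} {A : V → V → Prop}

section OutDegree

variable [Finite V] {S : Set V} {v : V}

lemma outDegOn_lt_outDeg_iff : outDegOn A S v < outDeg A v ↔ ∃ w, A v w ∧ w ∉ S := by
  have hsub : {w | w ∈ S ∧ A v w} ⊆ {w | A v w} := fun w hw => hw.2
  constructor
  · intro hlt
    by_contra! hall
    exact hlt.ne (congrArg ncard (hsub.antisymm fun w hw => ⟨hall w hw, hw⟩))
  · rintro ⟨w, hvw, hwS⟩
    exact ncard_lt_ncard ((ssubset_iff_of_subset hsub).2 ⟨w, hvw, fun hw => hwS hw.1⟩)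
      (toFinite _)

lemma outDeg_eq_zero_iff : outDeg A v = 0 ↔ ∀ w, ¬ A v w := by
  rw [outDeg, ncard_eq_zero (toFinite _), eq_empty_iff_forall_notMem]
  rfl

lemma outDegOn_le_outDeg_sub_one_iff :
    outDegOn A S v ≤ outDeg A v - 1 ↔ ((∃ w, A v w) → ∃ w, A v w ∧ w ∉ S) := by
  have hle : outDegOn A S v ≤ outDeg A v :=
    ncard_le_ncard (fun w hw => hw.2) (toFinite _)
  rw [← outDegOn_lt_outDeg_iff, ← not_forall_not, ← outDeg_eq_zero_iff]
  omega

end OutDegree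

def IsAlternatingOn (A : V → V → Prop) (c : V → ZMod 2) (B : Set V) : Prop :=
  ∀ v ∈ B, (∃ w, A v w) → ∃ w ∈ B, A v w ∧ c w ≠ c v

lemma exists_partition_iff_exists_isAlternatingOn_univ [Finite V] :
    (∃ V₁ V₂ : Set V, Disjoint V₁ V₂ ∧ V₁ ∪ V₂ = univ ∧
        (∀ v ∈ V₁, outDegOn A V₁ v ≤ outDeg A v - 1) ∧
        (∀ v ∈ V₂, outDegOn A V₂ v ≤ outDeg A v - 1)) ↔
      ∃ c, IsAlternatingOn A c univ := by
  simp only [outDegOn_le_outDeg_sub_one_iff]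
  constructor
  · rintro ⟨V₁, V₂, hdisj, hcover, h₁, h₂⟩
    classical
    refine ⟨fun v => if v ∈ V₁ then 0 else 1, fun v _ hv => ?_⟩
    rcases (hcover.symm ▸ mem_univ v : v ∈ V₁ ∪ V₂) with hv₁ | hv₂
    · obtain ⟨w, hvw, hw⟩ := h₁ v hv₁ hv
      exact ⟨w, mem_univ w, hvw, by simp [hv₁, hw]⟩
    · obtain ⟨w, hvw, hw⟩ := h₂ v hv₂ hv
      have hw₁ : w ∈ V₁ := (hcover.symm ▸ mem_univ w : w ∈ V₁ ∪ V₂).resolve_right hw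
      exact ⟨w, mem_univ w, hvw, by simp [hw₁, disjoint_right.1 hdisj hv₂]⟩
  · rintro ⟨c, hc⟩
    have hcases : ∀ a : ZMod 2, a = 0 ∨ a = 1 := by decide
    refine ⟨{v | c v = 0}, {v | c v = 1}, ?_, ?_, ?_, ?_⟩
    · exact disjoint_left.2 fun v h₀ h₁ => zero_ne_one (h₀.symm.trans h₁)
    · exact eq_univ_of_forall fun v => hcases (c v)
    all_goals
      intro v hv hout
      obtain ⟨w, -, hvw, hne⟩ := hc v (mem_univ v) hout
      exact ⟨w, hvw, fun hw => hne (hw.trans hv.symm)⟩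

section Cycles

lemma exists_iterate_mem_periodicPts [Finite V] (g : V → V) (x : V) :
    ∃ k, g^[k] x ∈ periodicPts g := by
  obtain ⟨m, n, hmn, heq⟩ := Finite.exists_ne_map_eq_of_infinite (fun k => g^[k] x)
  wlog hlt : m < n generalizing m n
  · exact this n m hmn.symm heq.symm (hmn.lt_or_gt.resolve_left hlt)
  refine ⟨m, mk_mem_periodicPts (Nat.sub_pos_of_lt hlt) ?_⟩
  rw [IsPeriodicPt, IsFixedPt, ← iterate_add_apply, Nat.sub_add_cancel hlt.le]
  exact heq.symm

variable {g : V → V} {x : V} [NeZero (minimalPeriod g x)]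

lemma injective_iterate_zmod_val :
    Injective fun i : ZMod (minimalPeriod g x) => g^[i.val] x := fun _ _ h =>
  ZMod.val_injective _ (iterate_injOn_Iio_minimalPeriod (ZMod.val_lt _) (ZMod.val_lt _) h)

lemma iterate_zmod_val_add_one (i : ZMod (minimalPeriod g x)) :
    g^[(i + 1).val] x = g (g^[i.val] x) := by
  have hmod : (i + 1).val % minimalPeriod g x = (i.val + 1) % minimalPeriod g x :=
    (ZMod.natCast_eq_natCast_iff' _ _ _).1 (by simp)
  rw [← iterate_mod_minimalPeriod_eq, hmod, iterate_mod_minimalPeriod_eq, iterate_succ_apply']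

end Cycles

lemma hasEvenCycleIn_of_mapsTo [Finite V] {S : Set V} {c : V → ZMod 2} {g : V → V}
    (hne : S.Nonempty) (hmaps : MapsTo g S S) (harc : ∀ v ∈ S, A v (g v))
    (hcol : ∀ v ∈ S, c (g v) ≠ c v) : HasEvenCycleIn A S := by
  obtain ⟨x₀, hx₀⟩ := hne
  obtain ⟨k, hper⟩ := exists_iterate_mem_periodicPts g x₀
  set x := g^[k] x₀
  have hx : x ∈ S := hmaps.iterate k hx₀
  have hnext : ∀ a b : ZMod 2, a ≠ b → a = b + 1 := by decide
  have hcolour : ∀ n : ℕ, c (g^[n] x) = c x + n := by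
    intro n
    induction n with
    | zero => simp
    | succ n ih =>
      rw [iterate_succ_apply', hnext _ _ (hcol _ (hmaps.iterate n hx)), ih]
      push_cast
      ring
  set p := minimalPeriod g x
  have heven : Even p := by
    have h := hcolour p
    rw [iterate_minimalPeriod, left_eq_add] at h
    exact (ZMod.natCast_eq_zero_iff_even).1 h
  have hpos : 0 < p := minimalPeriod_pos_of_mem_periodicPts hper
  have : NeZero p := ⟨hpos.ne'⟩
  refine ⟨p, ?_, heven, fun i => g^[i.val] x, injective_iterate_zmod_val,
    fun i => hmaps.iterate _ hx, fun i => ?_⟩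
  · obtain ⟨r, hr⟩ := heven
    omega
  · dsimp only
    rw [iterate_zmod_val_add_one]
    exact harc _ (hmaps.iterate _ hx)

lemma exists_arc_of_mem_nontrivial_strongComp {m v : V} (h : (strongComp A m).Nontrivial)
    (hv : v ∈ strongComp A m) : ∃ w, A v w := by
  obtain ⟨u, hu, hne⟩ := h.exists_ne v
  rcases (hv.2.trans hu.1).cases_head with rfl | ⟨w, hvw, -⟩
  · exact absurd rfl hne
  · exact ⟨w, hvw⟩

lemma IsTerminalSC.hasEvenCycleIn [Finite V] {c : V → ZMod 2} (hc : IsAlternatingOn A c univ)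
    {S : Set V} (hT : IsTerminalSC A S) (hS : S.Nontrivial) : HasEvenCycleIn A S := by
  obtain ⟨⟨m, rfl⟩, hclosed⟩ := hT
  have hstep : ∀ v ∈ strongComp A m, ∃ w, A v w ∧ w ∈ strongComp A m ∧ c w ≠ c v := by
    intro v hv
    obtain ⟨w, -, hvw, hne⟩ := hc v (mem_univ v) (exists_arc_of_mem_nontrivial_strongComp hS hv)
    exact ⟨w, hvw, hclosed v hv w hvw, hne⟩
  have : Nonempty V := hS.nonempty.to_subtype.map Subtype.val
  choose! g harc hmaps hcol using hstep
  exact hasEvenCycleIn_of_mapsTo hS.nonempty hmaps harc hcol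

lemma exists_isTerminalSC_of_reflTransGen [Finite V] (A : V → V → Prop) (v : V) :
    ∃ m, ReflTransGen A v m ∧ IsTerminalSC A (strongComp A m) := by
  obtain ⟨m, hvm, hmin⟩ := exists_min_image {m | ReflTransGen A v m}
    (fun m => {w | ReflTransGen A m w}.ncard) (toFinite _) ⟨v, ReflTransGen.refl⟩
  have hback : ∀ w, ReflTransGen A m w → ReflTransGen A w m := by
    intro w hmw
    have hsub : {u | ReflTransGen A w u} ⊆ {u | ReflTransGen A m u} := fun u hu => hmw.trans hu
    have heq := eq_of_subset_of_ncard_le hsub (hmin w (hvm.trans hmw)) (toFinite _)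
    exact (Set.ext_iff.1 heq m).2 ReflTransGen.refl
  refine ⟨m, hvm, ⟨m, rfl⟩, fun u hu w huw => ?_⟩
  exact ⟨hu.1.tail huw, hback w (hu.1.tail huw)⟩

lemma IsTerminalSC.forall_not_arc (hirr : ∀ v, ¬ A v v) {S : Set V} (hT : IsTerminalSC A S)
    (hS : ¬ S.Nontrivial) {m : V} (hm : m ∈ S) (w : V) : ¬ A m w := fun hmw =>
  hirr m (not_nontrivial_iff.1 hS (hT.2 m hm w hmw) hm ▸ hmw)

lemma notMem_of_reflTransGen {B : Set V} (hB : ∀ v ∉ B, ∀ w ∈ B, ¬ A v w) {v w : V}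
    (h : ReflTransGen A v w) (hv : v ∉ B) : w ∉ B := by
  induction h with
  | refl => exact hv
  | tail _ hab ih => exact fun hb => hB _ ih _ hb hab

namespace IsAlternatingOn

variable {c : V → ZMod 2} {B : Set V}

lemma insert_of_arc [DecidableEq V] (hc : IsAlternatingOn A c B) {v w : V} (hv : v ∉ B)
    (hw : w ∈ B) (hvw : A v w) : IsAlternatingOn A (update c v (c w + 1)) (insert v B) := by
  have hne : ∀ {u}, u ∈ B → u ≠ v := fun hu h => hv (h ▸ hu)
  rintro u (rfl | hu) hout
  · refine ⟨w, mem_insert_of_mem _ hw, hvw, ?_⟩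
    rw [update_of_ne (hne hw), update_self]
    exact (succ_ne_self _).symm
  · obtain ⟨w', hw', huw', hcol⟩ := hc u hu hout
    refine ⟨w', mem_insert_of_mem _ hw', huw', ?_⟩
    rwa [update_of_ne (hne hw'), update_of_ne (hne hu)]

lemma insert_of_forall_not_arc (hc : IsAlternatingOn A c B) {v : V} (hv : ∀ w, ¬ A v w) :
    IsAlternatingOn A c (insert v B) := by
  rintro u (rfl | hu) ⟨w, huw⟩
  · exact absurd huw (hv w)
  · obtain ⟨w', hw', huw', hcol⟩ := hc u hu ⟨w, huw⟩
    exact ⟨w', mem_insert_of_mem _ hw', huw', hcol⟩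

lemma union_range_of_even {n : ℕ} (hc : IsAlternatingOn A c B) (hn : Even n) {f : ZMod n → V}
    (hf : Injective f) (harc : ∀ i, A (f i) (f (i + 1))) (hdisj : Disjoint B (range f)) :
    IsAlternatingOn A (extend f (ZMod.castHom (even_iff_two_dvd.1 hn) (ZMod 2)) c)
      (B ∪ range f) := by
  have hout : ∀ {u}, u ∈ B → ¬ ∃ i, f i = u := fun hu hr => disjoint_left.1 hdisj hu hr
  rintro u (hu | ⟨i, rfl⟩) hsucc
  · obtain ⟨w, hw, huw, hcol⟩ := hc u hu hsucc
    refine ⟨w, Or.inl hw, huw, ?_⟩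
    rwa [extend_apply' _ _ _ (hout hw), extend_apply' _ _ _ (hout hu)]
  · refine ⟨f (i + 1), Or.inr ⟨i + 1, rfl⟩, harc i, ?_⟩
    rw [hf.extend_apply, hf.extend_apply, map_add, map_one]
    exact succ_ne_self _

end IsAlternatingOn

lemma exists_isAlternatingOn_ssuperset [Finite V] (hirr : ∀ v, ¬ A v v)
    (hcyc : ∀ S : Set V, IsTerminalSC A S → S.Nontrivial → HasEvenCycleIn A S)
    {c : V → ZMod 2} {B : Set V} (hc : IsAlternatingOn A c B) (hB : B ≠ univ) :
    ∃ B' ⊃ B, ∃ c', IsAlternatingOn A c' B' := by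
  classical
  by_cases hattach : ∃ v ∉ B, ∃ w ∈ B, A v w
  · obtain ⟨v, hv, w, hw, hvw⟩ := hattach
    exact ⟨_, ssubset_insert hv, _, hc.insert_of_arc hv hw hvw⟩
  push Not at hattach
  obtain ⟨v₀, hv₀⟩ := (ne_univ_iff_exists_notMem B).1 hB
  obtain ⟨m, hv₀m, hT⟩ := exists_isTerminalSC_of_reflTransGen A v₀
  have hTB : ∀ s ∈ strongComp A m, s ∉ B := fun s hs =>
    notMem_of_reflTransGen hattach (hv₀m.trans hs.1) hv₀
  have hm : m ∈ strongComp A m := ⟨ReflTransGen.refl, ReflTransGen.refl⟩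
  by_cases hS : (strongComp A m).Nontrivial
  · obtain ⟨n, -, hn, f, hf, hfS, harc⟩ := hcyc _ hT hS
    have hdisj : Disjoint B (range f) :=
      disjoint_right.2 fun _ ⟨i, hi⟩ => hi ▸ hTB _ (hfS i)
    exact ⟨_, ssubset_union_left_iff.2 fun h => hTB _ (hfS 0) (h (mem_range_self 0)), _,
      hc.union_range_of_even hn hf harc hdisj⟩
  · exact ⟨_, ssubset_insert (hTB m hm), _,
      hc.insert_of_forall_not_arc (hT.forall_not_arc hirr hS hm)⟩

lemma exists_isAlternatingOn_univ [Finite V] (hirr : ∀ v, ¬ A v v)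
    (hcyc : ∀ S : Set V, IsTerminalSC A S → S.Nontrivial → HasEvenCycleIn A S) :
    ∃ c, IsAlternatingOn A c univ :=
  WellFoundedGT.induction_top (P := fun B => ∃ c, IsAlternatingOn A c B)
    ⟨∅, 0, fun _ h => h.elim⟩
    fun _ hB ⟨_, hc⟩ => exists_isAlternatingOn_ssuperset hirr hcyc hc hB

end

/-- A digraph `D` admits a 1-all-out-degree-reducing 2-partition
(`d⁺_{D⟨Vᵢ⟩}(v) ≤ max {0, d⁺_D(v) − 1}`, expressed here with truncated subtraction)
if and only if every non-trivial terminal strong component of `D` contains an even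
directed cycle. -/
theorem stmt7 {V : Type*} [Fintype V]
    (A : V → V → Prop) (hirr : ∀ v, ¬ A v v) :
    (∃ V₁ V₂ : Set V, Disjoint V₁ V₂ ∧ V₁ ∪ V₂ = Set.univ ∧
        (∀ v ∈ V₁, outDegOn A V₁ v ≤ outDeg A v - 1) ∧
        (∀ v ∈ V₂, outDegOn A V₂ v ≤ outDeg A v - 1)) ↔
    (∀ S : Set V, IsTerminalSC A S → S.Nontrivial → HasEvenCycleIn A S) := by
  rw [exists_partition_iff_exists_isAlternatingOn_univ]
  exact ⟨fun ⟨_, hc⟩ _ hT hS => hT.hasEvenCycleIn hc hS, exists_isAlternatingOn_univ hirr⟩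
end

section
/- Let D be a digraph with Δ⁺(D) ≥ 1. Then D admits a 1-max-out-degree-reducing 2-partition if and only if every terminal strong component of D contains an even directed cycle or a vertex of out-degree (in D) less than Δ⁺(D). -/
set_option linter.unusedSectionVars false
set_option linter.unusedVariables false


section Helpers
variable {V : Type*} [Fintype V] {A : V → V → Prop}

lemma outDeg_le_maxOutDeg (A : V → V → Prop) (v : V) : outDeg A v ≤ maxOutDeg A :=
  le_csSup (Set.finite_range _).bddAbove ⟨v, rfl⟩

lemma outDegOn_le_outDeg (A : V → V → Prop) (S : Set V) (v : V) :
    outDegOn A S v ≤ outDeg A v :=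
  Set.ncard_le_ncard (fun w hw => hw.2) (Set.toFinite _)

lemma maxOutDegOn_le_iff {S : Set V} {k : ℕ} :
    maxOutDegOn A S ≤ k ↔ ∀ v ∈ S, outDegOn A S v ≤ k := by
  constructor
  · intro h v hv
    exact le_trans (le_csSup (Set.toFinite _).bddAbove (Set.mem_image_of_mem _ hv)) h
  · intro h
    rcases Set.eq_empty_or_nonempty S with hS | hS
    · simp [maxOutDegOn, hS]
    · exact csSup_le (hS.image _) (by rintro x ⟨v, hv, rfl⟩; exact h v hv)

lemma self_mem_strongComp (A : V → V → Prop) (v : V) : v ∈ strongComp A v :=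
  ⟨Relation.ReflTransGen.refl, Relation.ReflTransGen.refl⟩

lemma strongComp_eq {v w : V} (h : w ∈ strongComp A v) : strongComp A w = strongComp A v := by
  obtain ⟨hvw, hwv⟩ := h
  ext x
  exact ⟨fun ⟨h1, h2⟩ => ⟨hvw.trans h1, h2.trans hwv⟩,
    fun ⟨h1, h2⟩ => ⟨hwv.trans h1, h2.trans hvw⟩⟩

lemma mem_strongComp_reach {v w : V} (h : w ∈ strongComp A v) :
    Relation.ReflTransGen A v w := h.1

end Helpers

section Periodic
open Function
variable {V : Type*} [Fintype V] {A : V → V → Prop}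

lemma exists_periodic_iterate (f : V → V) (v : V) :
    ∃ k, f^[k] v ∈ Function.periodicPts f := by
  have : ¬ Function.Injective (fun k : ℕ => f^[k] v) := by
    intro hinj
    have : Finite ℕ := Finite.of_injective _ hinj
    exact not_finite ℕ
  rw [Function.not_injective_iff] at this
  obtain ⟨i, j, hij, hne⟩ := this
  rcases Nat.lt_or_ge i j with h | h
  · refine ⟨i, j - i, by omega, ?_⟩
    show f^[j-i] (f^[i] v) = f^[i] v
    rw [← Function.iterate_add_apply]
    rw [show j - i + i = j by omega]
    exact hij.symm
  · have h' : j < i := by omega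
    refine ⟨j, i - j, by omega, ?_⟩
    show f^[i-j] (f^[j] v) = f^[j] v
    rw [← Function.iterate_add_apply, show i - j + j = i by omega]
    exact hij

lemma minimalPeriod_of_cycle {n : ℕ} (hn : 2 ≤ n) (g : ZMod n → V)
    (hg : Function.Injective g) (f : V → V) (hf : ∀ i, f (g i) = g (i + 1)) (i : ZMod n) :
    Function.minimalPeriod f (g i) = n := by
  haveI : NeZero n := ⟨by omega⟩
  have key : ∀ (k : ℕ) (j : ZMod n), f^[k] (g j) = g (j + k) := by
    intro k
    induction k with
    | zero => intro j; simp
    | succ k ih =>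
      intro j
      rw [Function.iterate_succ_apply, hf, ih]
      congr 1
      push_cast
      ring
  have hper : Function.IsPeriodicPt f n (g i) := by
    show f^[n] (g i) = g i
    rw [key]
    congr 1
    simp [ZMod.natCast_self]
  have hmem : g i ∈ Function.periodicPts f := ⟨n, by omega, hper⟩
  have hpos : 0 < Function.minimalPeriod f (g i) :=
    Function.minimalPeriod_pos_of_mem_periodicPts hmem
  have hle : Function.minimalPeriod f (g i) ≤ n := hper.minimalPeriod_le (by omega)
  have hdvd : n ∣ Function.minimalPeriod f (g i) := by
    have h1 : f^[Function.minimalPeriod f (g i)] (g i) = g i :=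
      Function.isPeriodicPt_minimalPeriod f (g i)
    rw [key] at h1
    have h2 : (Function.minimalPeriod f (g i) : ZMod n) = 0 := by
      have h3 := hg h1
      have h4 : i + (Function.minimalPeriod f (g i) : ZMod n) - i = i - i := by rw [h3]
      simpa using h4
    exact (ZMod.natCast_eq_zero_iff _ _).1 h2
  exact le_antisymm hle (Nat.le_of_dvd hpos hdvd)

lemma iterate_mem_of_closed {S : Set V} {g : V → V} (hSg : ∀ z ∈ S, g z ∈ S)
    {y : V} (hy : y ∈ S) (k : ℕ) : g^[k] y ∈ S := by
  induction k with
  | zero => simpa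
  | succ k ih => rw [Function.iterate_succ_apply']; exact hSg _ ih

lemma hasEvenCycle_of_periodic (A : V → V → Prop) (g : V → V) (y : V) (S : Set V)
    (hyS : y ∈ S) (hSg : ∀ z ∈ S, g z ∈ S) (harc : ∀ z ∈ S, A z (g z))
    (hy : y ∈ Function.periodicPts g) (h2 : 2 ≤ Function.minimalPeriod g y)
    (heven : Even (Function.minimalPeriod g y)) :
    HasEvenCycleIn A S := by
  set n := Function.minimalPeriod g y with hn
  haveI : NeZero n := ⟨by omega⟩
  refine ⟨n, h2, heven, fun i => g^[i.val] y, ?_, fun i => iterate_mem_of_closed hSg hyS _, ?_⟩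
  · intro i j hij
    have := Function.iterate_injOn_Iio_minimalPeriod (f := g) (x := y)
      (ZMod.val_lt i) (ZMod.val_lt j) hij
    exact ZMod.val_injective n this
  · intro i
    have hval : (i + 1 : ZMod n).val = (i.val + 1) % n := by
      haveI : Fact (1 < n) := ⟨by omega⟩
      rw [ZMod.val_add, ZMod.val_one]
    have : g^[(i + 1 : ZMod n).val] y = g (g^[i.val] y) := by
      rw [hval, (Function.isPeriodicPt_minimalPeriod g y).iterate_mod_apply,
        Function.iterate_succ_apply']
    show A (g^[i.val] y) (g^[(i + 1 : ZMod n).val] y)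
    rw [this]
    exact harc _ (iterate_mem_of_closed hSg hyS _)

lemma even_minimalPeriod_of_flip (g : V → V) (c : V → Bool) (S : Set V)
    (hSg : ∀ z ∈ S, g z ∈ S) (hflip : ∀ z ∈ S, c (g z) = !c z)
    {y : V} (hyS : y ∈ S) (hy : y ∈ Function.periodicPts g) :
    Even (Function.minimalPeriod g y) ∧ 2 ≤ Function.minimalPeriod g y := by
  have key : ∀ k : ℕ, c (g^[k] y) = if Even k then c y else !c y := by
    intro k
    induction k with
    | zero => simp
    | succ k ih =>
      rw [Function.iterate_succ_apply', hflip _ (iterate_mem_of_closed hSg hyS k), ih]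
      by_cases h : Even k
      · rw [if_pos h, if_neg (by simp [Nat.even_add_one, h])]
      · rw [if_neg h, if_pos (by simp [Nat.even_add_one, h]), Bool.not_not]
  set n := Function.minimalPeriod g y with hn
  have hpos : 0 < n := Function.minimalPeriod_pos_of_mem_periodicPts hy
  have heq : c (g^[n] y) = c y := by rw [Function.iterate_minimalPeriod]
  have heven : Even n := by
    by_contra hodd
    rw [key n, if_neg hodd] at heq
    exact (Bool.not_ne_self (c y)) heq
  refine ⟨heven, ?_⟩
  rcases heven with ⟨m, hm⟩
  omega

lemma exists_reach_terminal (A : V → V → Prop) (v : V) :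
    ∃ u, Relation.ReflTransGen A v u ∧ IsTerminalSC A (strongComp A u) := by
  classical
  obtain ⟨u₀, hu₀T, hmin⟩ := Set.exists_min_image {u | Relation.ReflTransGen A v u}
    (fun u => {w | Relation.ReflTransGen A u w}.ncard) (Set.toFinite _)
    ⟨v, Relation.ReflTransGen.refl⟩
  refine ⟨u₀, hu₀T, ⟨u₀, rfl⟩, ?_⟩
  intro x hx w hxw
  have hu₀w : Relation.ReflTransGen A u₀ w := hx.1.trans (Relation.ReflTransGen.single hxw)
  have hwT : w ∈ {u | Relation.ReflTransGen A v u} := hu₀T.trans hu₀w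
  have hsub : {z | Relation.ReflTransGen A w z} ⊆ {z | Relation.ReflTransGen A u₀ z} :=
    fun z hz => hu₀w.trans hz
  have := hmin w hwT
  have heq : {z | Relation.ReflTransGen A w z} = {z | Relation.ReflTransGen A u₀ z} :=
    Set.eq_of_subset_of_ncard_le hsub this (Set.toFinite _)
  have hwu₀ : Relation.ReflTransGen A w u₀ := by
    have : u₀ ∈ {z | Relation.ReflTransGen A u₀ z} := Relation.ReflTransGen.refl
    rw [← heq] at this
    exact this
  exact ⟨hu₀w, hwu₀⟩

end Periodic

section Coloring
variable {V : Type*} [Fintype V] {A : V → V → Prop}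

lemma exists_flip_neighbor {V₁ V₂ : Set V} (hΔ : 1 ≤ maxOutDeg A)
    (huniv : V₁ ∪ V₂ = Set.univ)
    (h1 : maxOutDegOn A V₁ ≤ maxOutDeg A - 1) (h2 : maxOutDegOn A V₂ ≤ maxOutDeg A - 1)
    {v : V} (hv : ¬ outDeg A v < maxOutDeg A) :
    ∃ w, A v w ∧ (v ∈ V₁ ↔ w ∉ V₁) := by
  have hdeg : outDeg A v = maxOutDeg A := le_antisymm (outDeg_le_maxOutDeg A v) (by omega)
  have key : ∀ W : Set V, maxOutDegOn A W ≤ maxOutDeg A - 1 → v ∈ W →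
      ∃ w, A v w ∧ w ∉ W := by
    intro W hW hvW
    by_contra hcon
    push_neg at hcon
    have heq : {w | w ∈ W ∧ A v w} = {w | A v w} :=
      Set.eq_of_subset_of_ncard_le (fun w hw => hw.2)
        (Set.ncard_le_ncard (fun w hw => ⟨hcon w hw, hw⟩) (Set.toFinite _)) (Set.toFinite _)
    have : outDegOn A W v = maxOutDeg A := by rw [outDegOn, heq, ← outDeg, hdeg]
    have := maxOutDegOn_le_iff.1 hW v hvW
    omega
  by_cases hv1 : v ∈ V₁
  · obtain ⟨w, hw, hwn⟩ := key V₁ h1 hv1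
    exact ⟨w, hw, by tauto⟩
  · have hv2 : v ∈ V₂ := by
      have h : v ∈ V₁ ∪ V₂ := huniv ▸ Set.mem_univ v
      rcases h with h | h
      · exact absurd h hv1
      · exact h
    obtain ⟨w, hw, hwn⟩ := key V₂ h2 hv2
    have hw1 : w ∈ V₁ := by
      have h : w ∈ V₁ ∪ V₂ := huniv ▸ Set.mem_univ w
      rcases h with h | h
      · exact h
      · exact absurd h hwn
    exact ⟨w, hw, by tauto⟩

lemma partition_of_coloring (hΔ : 1 ≤ maxOutDeg A) (c : V → Bool)
    (hc : ∀ v, ¬ outDeg A v < maxOutDeg A → ∃ w, A v w ∧ c w ≠ c v) :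
    ∃ V₁ V₂ : Set V, Disjoint V₁ V₂ ∧ V₁ ∪ V₂ = Set.univ ∧
      maxOutDegOn A V₁ ≤ maxOutDeg A - 1 ∧ maxOutDegOn A V₂ ≤ maxOutDeg A - 1 := by
  have bound : ∀ b : Bool, maxOutDegOn A {v | c v = b} ≤ maxOutDeg A - 1 := by
    intro b
    rw [maxOutDegOn_le_iff]
    intro v hv
    simp only [Set.mem_setOf_eq] at hv
    by_cases hdef : outDeg A v < maxOutDeg A
    · have := outDegOn_le_outDeg A {v | c v = b} v; omega
    · obtain ⟨w, hAw, hcw⟩ := hc v hdef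
      have hwv : w ∉ {v | c v = b} := by
        simp only [Set.mem_setOf_eq]
        rw [hv] at hcw
        exact hcw
      have hss : {u | u ∈ {v | c v = b} ∧ A v u} ⊂ {u | A v u} :=
        ⟨fun u hu => hu.2, fun hsup => hwv (hsup hAw).1⟩
      have hlt : outDegOn A {v | c v = b} v < outDeg A v :=
        Set.ncard_lt_ncard hss (Set.toFinite _)
      have := outDeg_le_maxOutDeg A v
      omega
  refine ⟨{v | c v = true}, {v | c v = false}, ?_, ?_, bound true, bound false⟩
  · rw [Set.disjoint_left]
    intro a ha hb
    simp only [Set.mem_setOf_eq] at ha hb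
    rw [ha] at hb
    exact Bool.noConfusion hb
  · ext v
    simp only [Set.mem_union, Set.mem_setOf_eq, Set.mem_univ, iff_true]
    cases h : c v <;> simp

end Coloring

section Forward
variable {V : Type*} [Fintype V] {A : V → V → Prop}

lemma forward_dir (hΔ : 1 ≤ maxOutDeg A)
    (h : ∃ V₁ V₂ : Set V, Disjoint V₁ V₂ ∧ V₁ ∪ V₂ = Set.univ ∧
        maxOutDegOn A V₁ ≤ maxOutDeg A - 1 ∧ maxOutDegOn A V₂ ≤ maxOutDeg A - 1) :
    ∀ S : Set V, IsTerminalSC A S →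
      HasEvenCycleIn A S ∨ ∃ v ∈ S, outDeg A v < maxOutDeg A := by
  classical
  obtain ⟨V₁, V₂, hdisj, huniv, h1, h2⟩ := h
  intro S hS
  by_cases hdef : ∃ v ∈ S, outDeg A v < maxOutDeg A
  · exact Or.inr hdef
  push_neg at hdef
  left
  set c : V → Bool := fun v => decide (v ∈ V₁) with hc
  have hflipS : ∀ v ∈ S, ∃ w, w ∈ S ∧ A v w ∧ c w = !c v := by
    intro v hv
    obtain ⟨w, hAw, hiff⟩ := exists_flip_neighbor hΔ huniv h1 h2 (not_lt.2 (hdef v hv))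
    refine ⟨w, hS.2 v hv w hAw, hAw, ?_⟩
    by_cases h : v ∈ V₁
    · simp [hc, h, hiff.1 h]
    · have : w ∈ V₁ := by by_contra hw; exact h (hiff.2 hw)
      simp [hc, h, this]
  set g : V → V := fun v => if hv : v ∈ S then (hflipS v hv).choose else v with hg
  have hgS : ∀ z ∈ S, g z ∈ S := by
    intro z hz; simp only [hg, dif_pos hz]; exact (hflipS z hz).choose_spec.1
  have hgarc : ∀ z ∈ S, A z (g z) := by
    intro z hz; simp only [hg, dif_pos hz]; exact (hflipS z hz).choose_spec.2.1
  have hgflip : ∀ z ∈ S, c (g z) = !c z := by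
    intro z hz; simp only [hg, dif_pos hz]; exact (hflipS z hz).choose_spec.2.2
  obtain ⟨v₀, hv₀⟩ : ∃ v₀, v₀ ∈ S := by
    obtain ⟨u, hu⟩ := hS.1
    exact ⟨u, hu ▸ self_mem_strongComp A u⟩
  obtain ⟨k, hk⟩ := exists_periodic_iterate g v₀
  have hyS : g^[k] v₀ ∈ S := iterate_mem_of_closed hgS hv₀ k
  obtain ⟨heven, h2le⟩ := even_minimalPeriod_of_flip g c S hgS hgflip hyS hk
  exact hasEvenCycle_of_periodic A g (g^[k] v₀) S hyS hgS hgarc hk h2le heven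

end Forward

section OrbitAux
variable {V : Type*} [Fintype V]

def stepsTo (A : V → V → Prop) (G : Set V) : ℕ → V → Prop
  | 0, v => v ∈ G
  | (n+1), v => ∃ w, A v w ∧ stepsTo A G n w

lemma stepsTo_exists_of_reach {A : V → V → Prop} {G : Set V} {v u : V}
    (hG : u ∈ G) (h : Relation.ReflTransGen A v u) : ∃ n, stepsTo A G n v := by
  induction h using Relation.ReflTransGen.head_induction_on with
  | refl => exact ⟨0, hG⟩
  | head hab _ ih => obtain ⟨n, hn⟩ := ih; exact ⟨n + 1, _, hab, hn⟩

def orbS (f : V → V) (z : V) : Set V := {w | ∃ k, f^[k] z = w}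

lemma mem_orbS_self {f : V → V} {z : V} : z ∈ orbS f z := ⟨0, rfl⟩

lemma orbS_iterate {f : V → V} {z : V} (hz : z ∈ Function.periodicPts f) (j : ℕ) :
    orbS f (f^[j] z) = orbS f z := by
  obtain ⟨m, hmpos, hper⟩ := hz
  ext w
  constructor
  · rintro ⟨k, rfl⟩
    exact ⟨k + j, by rw [Function.iterate_add_apply]⟩
  · rintro ⟨k, rfl⟩
    have hjm : j ≤ m * j + k := by
      have : j ≤ m * j := Nat.le_mul_of_pos_left j hmpos
      omega
    refine ⟨m * j + k - j, ?_⟩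
    rw [← Function.iterate_add_apply, show m * j + k - j + j = k + m * j by omega,
      Function.iterate_add_apply, (hper.mul_const j).eq]

lemma periodic_pred_closure {f : V → V} {v : V} {m : ℕ}
    (hper : Function.IsPeriodicPt f m v) (hmpos : 0 < m) (P : V → Prop)
    (hP : ∀ z, P z → P (f z)) (j : ℕ) (hj : P (f^[j] v)) : P v := by
  have hall : ∀ k, P (f^[k] (f^[j] v)) := by
    intro k
    induction k with
    | zero => simpa
    | succ k ih => rw [Function.iterate_succ_apply']; exact hP _ ih
  have hjm : j ≤ m * (j + 1) := by
    have : j + 1 ≤ m * (j + 1) := Nat.le_mul_of_pos_left (j+1) hmpos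
    omega
  have hv : v = f^[m * (j+1) - j] (f^[j] v) := by
    rw [← Function.iterate_add_apply, show m * (j+1) - j + j = m * (j+1) by omega,
      (hper.mul_const (j+1)).eq]
  rw [hv]
  exact hall _

end OrbitAux

section Backward
variable {V : Type*} [Fintype V] {A : V → V → Prop}

lemma backward_dir (hirr : ∀ v, ¬ A v v) (hΔ : 1 ≤ maxOutDeg A)
    (H : ∀ S : Set V, IsTerminalSC A S →
        HasEvenCycleIn A S ∨ ∃ v ∈ S, outDeg A v < maxOutDeg A) :
    ∃ V₁ V₂ : Set V, Disjoint V₁ V₂ ∧ V₁ ∪ V₂ = Set.univ ∧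
        maxOutDegOn A V₁ ≤ maxOutDeg A - 1 ∧ maxOutDegOn A V₂ ≤ maxOutDeg A - 1 := by
  classical
  set Q : Set V → Prop := fun S => IsTerminalSC A S ∧ ∀ v ∈ S, ¬ outDeg A v < maxOutDeg A
    with hQdef
  have EX : ∀ S : Set V, ∃ (C : Set V) (σ : V → V),
      (Q S → C.Nonempty ∧ C ⊆ S ∧ (∀ w ∈ C, σ w ∈ C ∧ A w (σ w)) ∧
        (∀ f : V → V, (∀ w ∈ C, f w = σ w) → ∀ w ∈ C,
          2 ≤ Function.minimalPeriod f w ∧ Even (Function.minimalPeriod f w))) ∧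
      (¬ Q S → C = ∅) := by
    intro S
    by_cases hQ : Q S
    · have hcyc : HasEvenCycleIn A S := by
        rcases H S hQ.1 with h | h
        · exact h
        · obtain ⟨v, hvS, hvd⟩ := h
          exact absurd hvd (hQ.2 v hvS)
      obtain ⟨n, hn2, hneven, g, hginj, hgmem, hgarc⟩ := hcyc
      haveI : NeZero n := ⟨by omega⟩
      have hinv : ∀ i, Function.invFun g (g i) = i := fun i => hginj (Function.invFun_eq ⟨i, rfl⟩)
      refine ⟨Set.range g, fun w => g (Function.invFun g w + 1), fun _ => ?_, fun h => absurd hQ h⟩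
      refine ⟨⟨g 0, ⟨0, rfl⟩⟩, by rintro w ⟨i, rfl⟩; exact hgmem i, ?_, ?_⟩
      · rintro w ⟨i, rfl⟩
        show g (Function.invFun g (g i) + 1) ∈ Set.range g ∧ A (g i) (g (Function.invFun g (g i) + 1))
        rw [hinv]
        exact ⟨⟨i + 1, rfl⟩, hgarc i⟩
      · intro f hfagree w hw
        obtain ⟨i, rfl⟩ := hw
        have hf : ∀ j, f (g j) = g (j + 1) := by
          intro j
          rw [hfagree (g j) ⟨j, rfl⟩]
          show g (Function.invFun g (g j) + 1) = g (j + 1)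
          rw [hinv]
        rw [minimalPeriod_of_cycle hn2 g hginj f hf i]
        exact ⟨hn2, hneven⟩
    · exact ⟨∅, id, fun h => absurd h hQ, fun _ => rfl⟩
  choose Cset σset hEX using EX
  have hCempty : ∀ S, ¬ Q S → Cset S = ∅ := fun S h => (hEX S).2 h
  have hCP := fun S (h : Q S) => (hEX S).1 h
  set onCyc : V → Prop := fun w => w ∈ Cset (strongComp A w) with honcdef
  have hQ_of_onCyc : ∀ w, onCyc w → Q (strongComp A w) := by
    intro w hw
    by_contra h
    rw [honcdef] at hw
    simp only [hCempty _ h, Set.mem_empty_iff_false] at hw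
  have hCsetS : ∀ S, Q S → ∀ w ∈ Cset S,
      strongComp A w = S ∧ onCyc w ∧ ¬ outDeg A w < maxOutDeg A := by
    intro S hQS w hw
    obtain ⟨hne, hsub, hstep, hper⟩ := hCP S hQS
    obtain ⟨u₀, hu₀⟩ := hQS.1.1
    have hwS : w ∈ S := hsub hw
    have hsc : strongComp A w = S := by
      rw [hu₀] at hwS ⊢
      exact strongComp_eq hwS
    refine ⟨hsc, ?_, hQS.2 w hwS⟩
    show w ∈ Cset (strongComp A w)
    rw [hsc]
    exact hw
  -- reachability of "good" vertices
  have hd0 : ∀ v, ∃ n, stepsTo A {u | outDeg A u < maxOutDeg A ∨ onCyc u} n v := by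
    intro v
    obtain ⟨u, hvu, hterm⟩ := exists_reach_terminal A v
    by_cases hdef : ∃ x ∈ strongComp A u, outDeg A x < maxOutDeg A
    · obtain ⟨x, hxS, hxd⟩ := hdef
      exact stepsTo_exists_of_reach (Or.inl hxd) (hvu.trans hxS.1)
    · have hQu : Q (strongComp A u) := ⟨hterm, fun x hx hlt => hdef ⟨x, hx, hlt⟩⟩
      obtain ⟨⟨c₀, hc₀⟩, hsub, _, _⟩ := hCP _ hQu
      obtain ⟨hsc, honc, _⟩ := hCsetS _ hQu c₀ hc₀
      exact stepsTo_exists_of_reach (Or.inr honc) (hvu.trans (hsub hc₀).1)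
  set d : V → ℕ := fun v => Nat.find (hd0 v) with hddef
  have hdec : ∀ v, ¬ (outDeg A v < maxOutDeg A ∨ onCyc v) → ∃ w, A v w ∧ d w < d v := by
    intro v hv
    have hspec : stepsTo A {u | outDeg A u < maxOutDeg A ∨ onCyc u} (d v) v :=
      Nat.find_spec (hd0 v)
    rcases hdv : d v with _ | m
    · rw [hdv] at hspec
      exact absurd hspec hv
    · rw [hdv] at hspec
      obtain ⟨w, hw, hsw⟩ := hspec
      have : d w ≤ m := Nat.find_min' (hd0 w) hsw
      exact ⟨w, hw, by omega⟩
  -- the selection function f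
  set f : V → V := fun v =>
    if h1 : outDeg A v < maxOutDeg A then v
    else if h2 : onCyc v then σset (strongComp A v) v
    else (hdec v (not_or.mpr ⟨h1, h2⟩)).choose with hfdef
  have hf_def : ∀ v, outDeg A v < maxOutDeg A → f v = v := by
    intro v h
    simp only [hfdef, dif_pos h]
  have hf_cyc_eq : ∀ v, onCyc v → f v = σset (strongComp A v) v := by
    intro v h2
    have hQv := hQ_of_onCyc v h2
    have h1 : ¬ outDeg A v < maxOutDeg A := (hCsetS _ hQv v h2).2.2
    simp only [hfdef, dif_neg h1, dif_pos h2]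
  have hf_arc : ∀ v, ¬ outDeg A v < maxOutDeg A → A v (f v) := by
    intro v h1
    by_cases h2 : onCyc v
    · rw [hf_cyc_eq v h2]
      have hQv := hQ_of_onCyc v h2
      obtain ⟨_, _, hstep, _⟩ := hCP _ hQv
      exact (hstep v h2).2
    · simp only [hfdef, dif_neg h1, dif_neg h2]
      exact (hdec v (not_or.mpr ⟨h1, h2⟩)).choose_spec.1
  have hf_onCyc_closed : ∀ v, onCyc v → onCyc (f v) := by
    intro v h2
    have hQv := hQ_of_onCyc v h2
    obtain ⟨_, _, hstep, _⟩ := hCP _ hQv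
    have : f v ∈ Cset (strongComp A v) := by
      rw [hf_cyc_eq v h2]
      exact (hstep v h2).1
    exact (hCsetS _ hQv (f v) this).2.1
  have hf_d : ∀ v, ¬ outDeg A v < maxOutDeg A → ¬ onCyc v → d (f v) < d v := by
    intro v h1 h2
    simp only [hfdef, dif_neg h1, dif_neg h2]
    exact (hdec v (not_or.mpr ⟨h1, h2⟩)).choose_spec.2
  have hagree : ∀ S, Q S → ∀ w ∈ Cset S, f w = σset S w := by
    intro S hQS w hw
    obtain ⟨hsc, honc, hnd⟩ := hCsetS S hQS w hw
    rw [hf_cyc_eq w honc, hsc]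
  -- key parity fact for periodic points
  have crux : ∀ v ∈ Function.periodicPts f, 2 ≤ Function.minimalPeriod f v →
      Even (Function.minimalPeriod f v) := by
    intro v hv h2m
    set m := Function.minimalPeriod f v with hm
    have hper : Function.IsPeriodicPt f m v := Function.isPeriodicPt_minimalPeriod f v
    have hmpos : 0 < m := by omega
    have hnotfix : ¬ f v = v := by
      intro h
      have : m = 1 := Function.minimalPeriod_eq_one_iff_isFixedPt.2 h
      omega
    have hnd : ∀ j, ¬ outDeg A (f^[j] v) < maxOutDeg A := by
      intro j hdefj
      have hfix : f (f^[j] v) = f^[j] v := hf_def _ hdefj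
      exact hnotfix (periodic_pred_closure hper hmpos (fun z => f z = z)
        (fun z hz => by have hz' : f z = z := hz; show f (f z) = f z; rw [hz']; exact hz') j hfix)
    by_cases honc : onCyc v
    · have hQv := hQ_of_onCyc v honc
      obtain ⟨_, _, _, hperiod⟩ := hCP _ hQv
      exact (hperiod f (hagree _ hQv) v honc).2
    · exfalso
      have hoc : ∀ j, ¬ onCyc (f^[j] v) := by
        intro j hj
        exact honc (periodic_pred_closure hper hmpos onCyc hf_onCyc_closed j hj)
      have hstep : ∀ j, d (f^[j+1] v) < d (f^[j] v) := by
        intro j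
        rw [Function.iterate_succ_apply']
        exact hf_d _ (hnd j) (hoc j)
      have hchain : ∀ j, d (f^[j] v) + j ≤ d v := by
        intro j
        induction j with
        | zero => simp
        | succ j ih => have := hstep j; omega
      have := hchain (d v + 1)
      omega
  -- representatives and hitting times
  set ι : V → ℕ := fun v => ((Fintype.equivFin V) v : ℕ) with hιdef
  have hιinj : Function.Injective ι := fun a b h =>
    (Fintype.equivFin V).injective (Fin.val_injective h)
  set R : Set V := {z | f z = z} ∪
    {z | z ∈ Function.periodicPts f ∧ ∀ w ∈ orbS f z, ι z ≤ ι w} with hRdef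
  have hhit : ∀ v, ∃ k, f^[k] v ∈ R := by
    intro v
    obtain ⟨k₀, hk₀⟩ := exists_periodic_iterate f v
    obtain ⟨w, hworb, hwmin⟩ := Set.exists_min_image (orbS f (f^[k₀] v)) ι
      (Set.toFinite _) ⟨f^[k₀] v, mem_orbS_self⟩
    obtain ⟨j, hj⟩ := hworb
    refine ⟨j + k₀, ?_⟩
    rw [Function.iterate_add_apply, hj]
    right
    obtain ⟨m, hmpos, hmper⟩ := hk₀
    refine ⟨⟨m, hmpos, hj ▸ hmper.apply_iterate j⟩, ?_⟩
    intro u hu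
    rw [← hj, orbS_iterate ⟨m, hmpos, hmper⟩ j] at hu
    exact hwmin u hu
  set N : V → ℕ := fun v => Nat.find (hhit v) with hNdef
  set c : V → Bool := fun v => decide (N v % 2 = 1) with hcdef
  have hNspec : ∀ v, f^[N v] v ∈ R := fun v => Nat.find_spec (hhit v)
  have hNmin : ∀ v k, k < N v → f^[k] v ∉ R := fun v k hk => Nat.find_min (hhit v) hk
  have flip : ∀ v, ¬ outDeg A v < maxOutDeg A → c (f v) = !c v := by
    intro v h1
    have harc : A v (f v) := hf_arc v h1
    have hne : f v ≠ v := fun h => hirr v (by rwa [h] at harc)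
    by_cases h0 : N v = 0
    · have hvR : v ∈ R := by
        have := hNspec v
        rw [h0] at this
        exact this
      have hvReps : v ∈ Function.periodicPts f ∧ ∀ w ∈ orbS f v, ι v ≤ ι w := by
        rcases hvR with h | h
        · exact absurd h hne
        · exact h
      set m := Function.minimalPeriod f v with hm
      have hmpos : 0 < m := Function.minimalPeriod_pos_of_mem_periodicPts hvReps.1
      have hm1 : m ≠ 1 := fun h => hne (Function.minimalPeriod_eq_one_iff_isFixedPt.1 h)
      have h2m : 2 ≤ m := by omega
      have heven : Even m := crux v hvReps.1 h2m
      have hper : Function.IsPeriodicPt f m v := Function.isPeriodicPt_minimalPeriod f v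
      have hub : f^[m-1] (f v) ∈ R := by
        have heq2 : f^[m-1] (f v) = f^[m] v := by
          rw [← Function.iterate_succ_apply]
          congr 1
          omega
        rw [heq2, show f^[m] v = v from hper]
        exact hvR
      have hlb : ∀ j, j < m - 1 → f^[j] (f v) ∉ R := by
        intro j hj hR
        have hjv : f^[j+1] v ∈ R := by
          rw [Function.iterate_succ_apply]
          exact hR
        have hmp : Function.minimalPeriod f (f^[j+1] v) = m :=
          Function.minimalPeriod_apply_iterate hvReps.1 (j+1)
        rcases hjv with hfix | hreps
        · have : Function.minimalPeriod f (f^[j+1] v) = 1 :=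
            Function.minimalPeriod_eq_one_iff_isFixedPt.2 hfix
          omega
        · have h1' : ι (f^[j+1] v) ≤ ι v := by
            refine hreps.2 v ⟨m - (j+1), ?_⟩
            rw [← Function.iterate_add_apply, show m - (j+1) + (j+1) = m by omega]
            exact hper
          have h2' : ι v ≤ ι (f^[j+1] v) := hvReps.2 _ ⟨j+1, rfl⟩
          have hveq : v = f^[j+1] v := hιinj (le_antisymm h2' h1')
          have hper' : Function.IsPeriodicPt f (j+1) v := hveq.symm
          have := hper'.minimalPeriod_le (by omega)
          omega
      have hNfv : N (f v) = m - 1 := by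
        have h1' : N (f v) ≤ m - 1 := Nat.find_min' (hhit (f v)) hub
        have h2' : ¬ N (f v) < m - 1 := fun h => hlb _ h (hNspec (f v))
        omega
      have hm2 : m % 2 = 0 := Nat.even_iff.1 heven
      show (decide (N (f v) % 2 = 1)) = !(decide (N v % 2 = 1))
      rw [hNfv, h0]
      have hiff : ((m - 1) % 2 = 1) ↔ ¬ ((0 : ℕ) % 2 = 1) := by omega
      simp only [hiff, decide_not]
    · have hfvR : f^[N v - 1] (f v) ∈ R := by
        have heq2 : f^[N v - 1] (f v) = f^[N v] v := by
          rw [← Function.iterate_succ_apply]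
          congr 1
          omega
        rw [heq2]
        exact hNspec v
      have hNle : N (f v) ≤ N v - 1 := Nat.find_min' (hhit (f v)) hfvR
      have hNge : ¬ N (f v) < N v - 1 := by
        intro h
        have hmem : f^[N (f v) + 1] v ∈ R := by
          rw [Function.iterate_succ_apply]
          exact hNspec (f v)
        exact hNmin v _ (by omega) hmem
      have hNfv : N (f v) = N v - 1 := by omega
      show (decide (N (f v) % 2 = 1)) = !(decide (N v % 2 = 1))
      rw [hNfv]
      have hiff : ((N v - 1) % 2 = 1) ↔ ¬ (N v % 2 = 1) := by omega
      simp only [hiff, decide_not]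
  exact partition_of_coloring hΔ c fun v hv =>
    ⟨f v, hf_arc v hv, by rw [flip v hv]; exact Bool.not_ne_self _⟩

end Backward

/-- Let `D` be a digraph with `Δ⁺(D) ≥ 1`. Then `D` admits a
1-max-out-degree-reducing 2-partition (`Δ⁺(D⟨Vᵢ⟩) ≤ max {0, Δ⁺(D) − 1}`, expressed with
truncated subtraction) if and only if every terminal strong component of `D` contains an
even directed cycle or a vertex of out-degree (in `D`) less than `Δ⁺(D)`. -/
theorem stmt8 {V : Type*} [Fintype V]
    (A : V → V → Prop) (hirr : ∀ v, ¬ A v v) (hΔ : 1 ≤ maxOutDeg A) :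
    (∃ V₁ V₂ : Set V, Disjoint V₁ V₂ ∧ V₁ ∪ V₂ = Set.univ ∧
        maxOutDegOn A V₁ ≤ maxOutDeg A - 1 ∧ maxOutDegOn A V₂ ≤ maxOutDeg A - 1) ↔
    (∀ S : Set V, IsTerminalSC A S →
        HasEvenCycleIn A S ∨ ∃ v ∈ S, outDeg A v < maxOutDeg A) := by
  constructor
  · exact forward_dir hΔ
  · exact backward_dir hirr hΔ
end

section
/- Let k₁, k₂, i, p be positive integers with 1 ≤ k₁ ≤ k₂, let D be a digraph and let x, y be two (not necessarily distinct) vertices of D. Let D′ be the digraph obtained from D by adding an (x,y)-(i,p)-connector (with all new vertices disjoint from V(D)). Then D′ has a (Δ⁺ ≤ k₁, Δ⁺ ≤ k₂)-partition if and only if D has one. -/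
/-- The arc relation of the digraph `D′` obtained from a digraph `D` (with arc relation
`A` on vertex set `V`) by adding an `(x,y)-(i,p)`-connector whose internal vertices are
new. The vertex type of `D′` is `V ⊕ (Unit ⊕ Fin i ⊕ Fin p ⊕ Fin p)`, where
`Sum.inr (Sum.inl ())` is the vertex `s`, `Sum.inr (Sum.inr (Sum.inl t))` are the
vertices of `T` (`|T| = i`), `Sum.inr (Sum.inr (Sum.inr (Sum.inl j)))` those of `U` and
`Sum.inr (Sum.inr (Sum.inr (Sum.inr j)))` those of `U′` (`|U| = |U′| = p`), with
distinguished vertices `u = U u₀` and `u′ = U′ u₁`. The arcs are: the arcs of `D`;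
all arcs from `x` to `T`; all arcs from `T` to `U`; all arcs in both directions between
`U` and `U′` except the arc `u′u`; all arcs from `s` to `U′ \ {u′}`; the arc `u′s`; and
the arc `sy`. -/
def connArc {V : Type*} (A : V → V → Prop) (x y : V) (i p : ℕ) (u₀ u₁ : Fin p) :
    V ⊕ (Unit ⊕ Fin i ⊕ Fin p ⊕ Fin p) → V ⊕ (Unit ⊕ Fin i ⊕ Fin p ⊕ Fin p) → Prop
  | Sum.inl a, Sum.inl b => A a b
  | Sum.inl a, Sum.inr (Sum.inr (Sum.inl _)) => a = x
  | Sum.inr (Sum.inr (Sum.inl _)), Sum.inr (Sum.inr (Sum.inr (Sum.inl _))) => True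
  | Sum.inr (Sum.inr (Sum.inr (Sum.inl _))), Sum.inr (Sum.inr (Sum.inr (Sum.inr _))) => True
  | Sum.inr (Sum.inr (Sum.inr (Sum.inr j'))), Sum.inr (Sum.inr (Sum.inr (Sum.inl j))) =>
      ¬ (j' = u₁ ∧ j = u₀)
  | Sum.inr (Sum.inl _), Sum.inr (Sum.inr (Sum.inr (Sum.inr j'))) => j' ≠ u₁
  | Sum.inr (Sum.inr (Sum.inr (Sum.inr j'))), Sum.inr (Sum.inl _) => j' = u₁
  | Sum.inr (Sum.inl _), Sum.inl b => b = y
  | _, _ => False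

lemma maxOutDegOn_le_aux {V : Type*} {A : V → V → Prop} {S : Set V} {k : ℕ}
    (h : ∀ v ∈ S, outDegOn A S v ≤ k) : maxOutDegOn A S ≤ k := by
  apply csSup_le'
  rintro n ⟨v, hv, rfl⟩
  exact h v hv

lemma le_maxOutDegOn_aux {V : Type*} [Finite V] {A : V → V → Prop} {S : Set V} {v : V}
    (hv : v ∈ S) : outDegOn A S v ≤ maxOutDegOn A S :=
  le_csSup (Set.Finite.bddAbove (S.toFinite.image _)) ⟨v, hv, rfl⟩

lemma extend_aux (k k' i p : ℕ) (hk : 1 ≤ k)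
    {V : Type*} [Fintype V] (A : V → V → Prop)
    (x y : V) (u₀ u₁ : Fin p)
    (V₁ V₂ : Set V) (hd : Disjoint V₁ V₂) (hu : V₁ ∪ V₂ = Set.univ)
    (h1 : maxOutDegOn A V₁ ≤ k) (h2 : maxOutDegOn A V₂ ≤ k')
    (hx : x ∈ V₁) :
    ∃ W₁ W₂ : Set (V ⊕ (Unit ⊕ Fin i ⊕ Fin p ⊕ Fin p)),
      Disjoint W₁ W₂ ∧ W₁ ∪ W₂ = Set.univ ∧
      maxOutDegOn (connArc A x y i p u₀ u₁) W₁ ≤ k ∧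
      maxOutDegOn (connArc A x y i p u₀ u₁) W₂ ≤ k' := by
  classical
  set A' := connArc A x y i p u₀ u₁ with hA'
  have hc : ∀ v : V, v ∉ V₁ → v ∈ V₂ := by
    intro v hv
    have : v ∈ V₁ ∪ V₂ := hu ▸ Set.mem_univ v
    rcases this with h | h
    · exact absurd h hv
    · exact h
  set W₁ : Set (V ⊕ (Unit ⊕ Fin i ⊕ Fin p ⊕ Fin p)) :=
    {z | match z with
      | Sum.inl v => v ∈ V₁
      | Sum.inr (Sum.inl _) => True
      | Sum.inr (Sum.inr (Sum.inl _)) => False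
      | Sum.inr (Sum.inr (Sum.inr (Sum.inl _))) => True
      | Sum.inr (Sum.inr (Sum.inr (Sum.inr _))) => False} with hW₁
  refine ⟨W₁, W₁ᶜ, disjoint_compl_right, Set.union_compl_self W₁, ?_, ?_⟩
  · -- bound on W₁
    apply maxOutDegOn_le_aux
    rintro (v | ⟨⟩ | t | j | j) hz
    · -- vertex of V
      have hv : v ∈ V₁ := hz
      have hset : {w | w ∈ W₁ ∧ A' (Sum.inl v) w} = Sum.inl '' {b | b ∈ V₁ ∧ A v b} := by
        ext w
        constructor
        · rintro ⟨hw, ha⟩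
          rcases w with b | ⟨⟩ | t | j | j
          · exact ⟨b, ⟨hw, ha⟩, rfl⟩
          · exact absurd ha (by intro h; exact h)
          · exact absurd hw (by intro h; exact h)
          · exact absurd ha (by intro h; exact h)
          · exact absurd hw (by intro h; exact h)
        · rintro ⟨b, ⟨hb, hab⟩, rfl⟩
          exact ⟨hb, hab⟩
      unfold outDegOn
      rw [hset, Set.ncard_image_of_injective _ Sum.inl_injective]
      calc {b | b ∈ V₁ ∧ A v b}.ncard = outDegOn A V₁ v := rfl
        _ ≤ maxOutDegOn A V₁ := le_maxOutDegOn_aux hv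
        _ ≤ k := h1
    · -- s
      have hsub : {w | w ∈ W₁ ∧ A' (Sum.inr (Sum.inl ())) w} ⊆ {Sum.inl y} := by
        rintro w ⟨hw, ha⟩
        rcases w with b | ⟨⟩ | t | j | j
        · have : b = y := ha
          simp [this]
        · exact absurd ha (by intro h; exact h)
        · exact absurd hw (by intro h; exact h)
        · exact absurd ha (by intro h; exact h)
        · exact absurd hw (by intro h; exact h)
      calc outDegOn A' W₁ (Sum.inr (Sum.inl ())) ≤ ({Sum.inl y} : Set _).ncard :=
            Set.ncard_le_ncard hsub (Set.toFinite _)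
        _ = 1 := Set.ncard_singleton _
        _ ≤ k := hk
    · exact absurd hz (by intro h; exact h)
    · -- U vertex
      have hset : {w | w ∈ W₁ ∧ A' (Sum.inr (Sum.inr (Sum.inr (Sum.inl j)))) w} = ∅ := by
        rw [Set.eq_empty_iff_forall_notMem]
        rintro w ⟨hw, ha⟩
        rcases w with b | ⟨⟩ | t | j' | j'
        · exact ha
        · exact ha
        · exact hw
        · exact ha
        · exact hw
      unfold outDegOn
      rw [hset]
      simp
    · exact absurd hz (by intro h; exact h)
  · -- bound on W₂ = W₁ᶜ
    apply maxOutDegOn_le_aux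
    rintro (v | ⟨⟩ | t | j | j) hz
    · -- vertex of V, v ∉ V₁
      have hv : v ∉ V₁ := hz
      have hv2 : v ∈ V₂ := hc v hv
      have hset : {w | w ∈ W₁ᶜ ∧ A' (Sum.inl v) w} = Sum.inl '' {b | b ∈ V₂ ∧ A v b} := by
        ext w
        constructor
        · rintro ⟨hw, ha⟩
          rcases w with b | ⟨⟩ | t | j | j
          · exact ⟨b, ⟨hc b hw, ha⟩, rfl⟩
          · exact absurd trivial hw
          · -- T vertex : ha : v = x, contradiction
            have : v = x := ha
            exact absurd (this ▸ hx) hv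
          · exact absurd trivial hw
          · exact absurd ha (by intro h; exact h)
        · rintro ⟨b, ⟨hb, hab⟩, rfl⟩
          exact ⟨fun h => hd.ne_of_mem h hb rfl, hab⟩
      unfold outDegOn
      rw [hset, Set.ncard_image_of_injective _ Sum.inl_injective]
      calc {b | b ∈ V₂ ∧ A v b}.ncard = outDegOn A V₂ v := rfl
        _ ≤ maxOutDegOn A V₂ := le_maxOutDegOn_aux hv2
        _ ≤ k' := h2
    · exact absurd trivial hz
    · -- T vertex
      have hset : {w | w ∈ W₁ᶜ ∧ A' (Sum.inr (Sum.inr (Sum.inl t))) w} = ∅ := by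
        rw [Set.eq_empty_iff_forall_notMem]
        rintro w ⟨hw, ha⟩
        rcases w with b | ⟨⟩ | t' | j | j
        · exact ha
        · exact ha
        · exact ha
        · exact absurd trivial hw
        · exact ha
      unfold outDegOn
      rw [hset]
      simp
    · exact absurd trivial hz
    · -- U' vertex
      have hset : {w | w ∈ W₁ᶜ ∧ A' (Sum.inr (Sum.inr (Sum.inr (Sum.inr j)))) w} = ∅ := by
        rw [Set.eq_empty_iff_forall_notMem]
        rintro w ⟨hw, ha⟩
        rcases w with b | ⟨⟩ | t | j' | j'
        · exact ha
        · exact absurd trivial hw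
        · exact ha
        · exact absurd trivial hw
        · exact ha
      unfold outDegOn
      rw [hset]
      simp

/-- Let `k₁, k₂, i, p` be positive integers with `1 ≤ k₁ ≤ k₂`, let `D`
be a digraph and `x, y` two (not necessarily distinct) vertices of `D`. Let `D′` be
obtained from `D` by adding an `(x,y)-(i,p)`-connector (all new vertices disjoint from
`V(D)`). Then `D′` has a `(Δ⁺ ≤ k₁, Δ⁺ ≤ k₂)`-partition iff `D` has one. -/
theorem stmt9 (k₁ k₂ i p : ℕ) (hk₁ : 1 ≤ k₁) (hk₁₂ : k₁ ≤ k₂) (hi : 0 < i) (hp : 0 < p)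
    {V : Type*} [Fintype V] (A : V → V → Prop) (hirr : ∀ v, ¬ A v v)
    (x y : V) (u₀ u₁ : Fin p) :
    (∃ W₁ W₂ : Set (V ⊕ (Unit ⊕ Fin i ⊕ Fin p ⊕ Fin p)),
        Disjoint W₁ W₂ ∧ W₁ ∪ W₂ = Set.univ ∧
        maxOutDegOn (connArc A x y i p u₀ u₁) W₁ ≤ k₁ ∧
        maxOutDegOn (connArc A x y i p u₀ u₁) W₂ ≤ k₂) ↔
    (∃ V₁ V₂ : Set V, Disjoint V₁ V₂ ∧ V₁ ∪ V₂ = Set.univ ∧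
        maxOutDegOn A V₁ ≤ k₁ ∧ maxOutDegOn A V₂ ≤ k₂) := by
  constructor
  · rintro ⟨W₁, W₂, hdis, huniv, h1, h2⟩
    refine ⟨Sum.inl ⁻¹' W₁, Sum.inl ⁻¹' W₂, hdis.preimage _, ?_, ?_, ?_⟩
    · ext v
      simp only [Set.mem_union, Set.mem_preimage, Set.mem_univ, iff_true]
      have : Sum.inl v ∈ W₁ ∪ W₂ := huniv ▸ Set.mem_univ _
      exact this
    · apply maxOutDegOn_le_aux
      intro v hv
      have hsub : Sum.inl '' {b | b ∈ Sum.inl ⁻¹' W₁ ∧ A v b} ⊆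
          {w | w ∈ W₁ ∧ connArc A x y i p u₀ u₁ (Sum.inl v) w} := by
        rintro w ⟨b, ⟨hb, hab⟩, rfl⟩
        exact ⟨hb, hab⟩
      calc outDegOn A (Sum.inl ⁻¹' W₁) v
          = (Sum.inl '' {b | b ∈ Sum.inl ⁻¹' W₁ ∧ A v b}).ncard :=
            (Set.ncard_image_of_injective _ Sum.inl_injective).symm
        _ ≤ outDegOn (connArc A x y i p u₀ u₁) W₁ (Sum.inl v) :=
            Set.ncard_le_ncard hsub (Set.toFinite _)
        _ ≤ maxOutDegOn (connArc A x y i p u₀ u₁) W₁ := le_maxOutDegOn_aux hv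
        _ ≤ k₁ := h1
    · apply maxOutDegOn_le_aux
      intro v hv
      have hsub : Sum.inl '' {b | b ∈ Sum.inl ⁻¹' W₂ ∧ A v b} ⊆
          {w | w ∈ W₂ ∧ connArc A x y i p u₀ u₁ (Sum.inl v) w} := by
        rintro w ⟨b, ⟨hb, hab⟩, rfl⟩
        exact ⟨hb, hab⟩
      calc outDegOn A (Sum.inl ⁻¹' W₂) v
          = (Sum.inl '' {b | b ∈ Sum.inl ⁻¹' W₂ ∧ A v b}).ncard :=
            (Set.ncard_image_of_injective _ Sum.inl_injective).symm
        _ ≤ outDegOn (connArc A x y i p u₀ u₁) W₂ (Sum.inl v) :=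
            Set.ncard_le_ncard hsub (Set.toFinite _)
        _ ≤ maxOutDegOn (connArc A x y i p u₀ u₁) W₂ := le_maxOutDegOn_aux hv
        _ ≤ k₂ := h2
  · rintro ⟨V₁, V₂, hd, hu, h1, h2⟩
    by_cases hx : x ∈ V₁
    · exact extend_aux k₁ k₂ i p hk₁ A x y u₀ u₁ V₁ V₂ hd hu h1 h2 hx
    · have hx2 : x ∈ V₂ := by
        have : x ∈ V₁ ∪ V₂ := hu ▸ Set.mem_univ x
        rcases this with h | h
        · exact absurd h hx
        · exact h
      obtain ⟨W₁, W₂, a, b, c, d⟩ :=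
        extend_aux k₂ k₁ i p (hk₁.trans hk₁₂) A x y u₀ u₁ V₂ V₁ hd.symm
          (by rw [Set.union_comm]; exact hu) h2 h1 hx2
      exact ⟨W₂, W₁, a.symm, by rw [Set.union_comm]; exact b, d, c⟩
end

section
/- For every positive integer k, every digraph D has a k-all-out-degree-reducing (2k+1)-partition, i.e. a (2k+1)-partition (V₁,…,V_{2k+1}) of V(D) such that d⁺_{D⟨Vᵢ⟩}(v) ≤ max{0, d⁺_D(v) − k} for all i ∈ [2k+1] and all v ∈ Vᵢ. -/
/-- Greedy coloring lemma: if each vertex `v` selects at most `k` "cut" neighbours `S v`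
(not including itself), then there is a `(2k+1)`-coloring such that every vertex gets a
color different from all its selected neighbours. -/
lemma color_lemma (k : ℕ) {V : Type*} [Fintype V] [DecidableEq V]
    (S : V → Finset V) (hcard : ∀ v, (S v).card ≤ k) (hirr : ∀ v, v ∉ S v)
    (T : Finset V) : ∃ c : V → Fin (2 * k + 1),
      ∀ v ∈ T, ∀ w ∈ T, w ∈ S v → c v ≠ c w := by
  induction T using Finset.strongInduction with
  | _ T ih =>
    rcases T.eq_empty_or_nonempty with rfl | hT
    · exact ⟨fun _ => ⟨0, by omega⟩, by simp⟩
    · set deg : V → ℕ := fun v => (T.filter (fun w => w ∈ S v ∨ v ∈ S w)).card with hdeg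
      have hsum : ∑ v ∈ T, deg v ≤ 2 * k * T.card := by
        have h1 : ∀ v ∈ T, deg v ≤ (T.filter (fun w => w ∈ S v)).card +
            (T.filter (fun w => v ∈ S w)).card := by
          intro v _
          rw [hdeg]
          simp only
          rw [Finset.filter_or]
          exact Finset.card_union_le _ _
        have h2 : ∑ v ∈ T, (T.filter (fun w => w ∈ S v)).card ≤ k * T.card := by
          calc ∑ v ∈ T, (T.filter (fun w => w ∈ S v)).card
              ≤ ∑ v ∈ T, (S v).card :=
                Finset.sum_le_sum (fun v _ => Finset.card_le_card
                  (fun w hw => (Finset.mem_filter.mp hw).2))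
            _ ≤ ∑ _v ∈ T, k := Finset.sum_le_sum (fun v _ => hcard v)
            _ = k * T.card := by rw [Finset.sum_const, smul_eq_mul, mul_comm]
        have h3 : ∑ v ∈ T, (T.filter (fun w => v ∈ S w)).card
            = ∑ w ∈ T, (T.filter (fun v => v ∈ S w)).card := by
          simp only [Finset.card_filter]
          exact Finset.sum_comm
        have h4 : ∑ w ∈ T, (T.filter (fun v => v ∈ S w)).card ≤ k * T.card := by
          calc ∑ w ∈ T, (T.filter (fun v => v ∈ S w)).card
              ≤ ∑ w ∈ T, (S w).card :=
                Finset.sum_le_sum (fun w _ => Finset.card_le_card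
                  (fun v hv => (Finset.mem_filter.mp hv).2))
            _ ≤ ∑ _w ∈ T, k := Finset.sum_le_sum (fun w _ => hcard w)
            _ = k * T.card := by rw [Finset.sum_const, smul_eq_mul, mul_comm]
        calc ∑ v ∈ T, deg v
            ≤ ∑ v ∈ T, ((T.filter (fun w => w ∈ S v)).card +
              (T.filter (fun w => v ∈ S w)).card) := Finset.sum_le_sum h1
          _ = ∑ v ∈ T, (T.filter (fun w => w ∈ S v)).card +
              ∑ v ∈ T, (T.filter (fun w => v ∈ S w)).card := Finset.sum_add_distrib
          _ ≤ k * T.card + k * T.card := by rw [h3]; exact Nat.add_le_add h2 h4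
          _ = 2 * k * T.card := by ring
      -- find a vertex of degree ≤ 2k
      obtain ⟨v, hvT, hvdeg⟩ : ∃ v ∈ T, deg v ≤ 2 * k := by
        by_contra h
        push_neg at h
        have hconst : ∑ _v ∈ T, (2 * k + 1) ≤ ∑ v ∈ T, deg v :=
          Finset.sum_le_sum (fun v hv => h v hv)
        rw [Finset.sum_const, smul_eq_mul] at hconst
        have hTc : 0 < T.card := Finset.card_pos.mpr hT
        nlinarith [hsum, hconst]
      obtain ⟨c, hc⟩ := ih (T.erase v) (Finset.erase_ssubset hvT)
      set U : Finset (Fin (2 * k + 1)) :=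
        (T.filter (fun w => w ∈ S v ∨ v ∈ S w)).image c with hU
      have hUcard : U.card ≤ 2 * k := le_trans (Finset.card_image_le) hvdeg
      obtain ⟨j, hj⟩ : ∃ j : Fin (2 * k + 1), j ∉ U := by
        by_contra h
        push_neg at h
        have : (Finset.univ : Finset (Fin (2 * k + 1))).card ≤ U.card :=
          Finset.card_le_card (fun x _ => h x)
        simp [Finset.card_univ] at this
        omega
      refine ⟨Function.update c v j, ?_⟩
      intro x hx w hw hwS
      by_cases hxv : x = v
      · subst hxv
        by_cases hwv : w = x
        · subst hwv; exact absurd hwS (hirr _)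
        · rw [Function.update_self, Function.update_of_ne hwv]
          intro hcontra
          apply hj
          rw [hU]
          exact hcontra ▸ Finset.mem_image_of_mem c
            (Finset.mem_filter.mpr ⟨hw, Or.inl hwS⟩)
      · by_cases hwv : w = v
        · subst hwv
          rw [Function.update_of_ne hxv, Function.update_self]
          intro hcontra
          apply hj
          rw [hU]
          exact hcontra ▸ Finset.mem_image_of_mem c
            (Finset.mem_filter.mpr ⟨hx, Or.inr hwS⟩)
        · rw [Function.update_of_ne hxv, Function.update_of_ne hwv]
          exact hc x (Finset.mem_erase.mpr ⟨hxv, hx⟩) w (Finset.mem_erase.mpr ⟨hwv, hw⟩) hwS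

/-- For every positive integer `k`, every digraph `D` has a
`k`-all-out-degree-reducing `(2k+1)`-partition: a partition `(V₁, …, V_{2k+1})` of
`V(D)` with `d⁺_{D⟨Vᵢ⟩}(v) ≤ max {0, d⁺_D(v) − k}` (truncated subtraction) for all
`i` and all `v ∈ Vᵢ`. -/
theorem stmt10 (k : ℕ) (hk : 0 < k) {V : Type*} [Fintype V]
    (A : V → V → Prop) (hirr : ∀ v, ¬ A v v) :
    ∃ P : Fin (2 * k + 1) → Set V,
      Pairwise (fun i j => Disjoint (P i) (P j)) ∧
      (⋃ i, P i) = Set.univ ∧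
      ∀ i, ∀ v ∈ P i, outDegOn A (P i) v ≤ outDeg A v - k := by
  classical
  set N : V → Finset V := fun v => Finset.univ.filter (fun w => A v w) with hN
  have hNset : ∀ v, {w | A v w} = ↑(N v) := by
    intro v; ext w; simp [hN]
  have hdeg : ∀ v, outDeg A v = (N v).card := by
    intro v; rw [outDeg, hNset v, Set.ncard_coe_finset]
  have hex : ∀ v, ∃ t ⊆ N v, t.card = min k (N v).card :=
    fun v => Finset.exists_subset_card_eq (min_le_right _ _)
  choose S hS hScard using hex
  have hcard : ∀ v, (S v).card ≤ k := fun v => (hScard v) ▸ min_le_left _ _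
  have hirr' : ∀ v, v ∉ S v := by
    intro v hv
    exact hirr v (by simpa [hN] using hS v hv)
  obtain ⟨c, hc⟩ := color_lemma k S hcard hirr' Finset.univ
  refine ⟨fun i => {v | c v = i}, ?_, ?_, ?_⟩
  · intro i j hij
    rw [Set.disjoint_left]
    rintro v (hvi : c v = i) (hvj : c v = j)
    exact hij (hvi ▸ hvj)
  · ext v
    simp only [Set.mem_iUnion, Set.mem_univ, iff_true]
    exact ⟨c v, rfl⟩
  · intro i v hvi
    have hsub : {w | w ∈ {v | c v = i} ∧ A v w} ⊆ ↑(N v \ S v) := by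
      rintro w ⟨hwi, hA⟩
      simp only [Finset.coe_sdiff, Set.mem_diff, Finset.mem_coe]
      refine ⟨by simp [hN, hA], fun hwS => ?_⟩
      exact hc v (Finset.mem_univ v) w (Finset.mem_univ w) hwS
        (show c v = c w from hvi.trans hwi.symm)
    have h1 : outDegOn A {v | c v = i} v ≤ (N v \ S v).card := by
      rw [outDegOn, ← Set.ncard_coe_finset]
      exact Set.ncard_le_ncard hsub (Finset.finite_toSet _)
    have h2 : (N v \ S v).card = (N v).card - (S v).card := Finset.card_sdiff_of_subset (hS v)
    rw [hdeg]
    have h3 : (N v).card - (S v).card ≤ (N v).card - k := by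
      rw [hScard v]
      omega
    exact le_trans (h2 ▸ h1) h3
end

section
/- For every positive integer k, no k-regular tournament (a tournament on 2k+1 vertices in which every vertex has out-degree k) admits a k-all-out-degree-reducing 2k-partition; hence the bound 2k+1 in the statement that every digraph has a k-all-out-degree-reducing (2k+1)-partition is best possible. -/
/-- For every positive integer `k`, no `k`-regular tournament (a
tournament on `2k+1` vertices in which every vertex has out-degree `k`) admits a
`k`-all-out-degree-reducing `2k`-partition. -/
theorem stmt11 (k : ℕ) (hk : 0 < k) {V : Type*} [Fintype V]
    (A : V → V → Prop) (hirr : ∀ v, ¬ A v v)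
    (htour : ∀ u v : V, u ≠ v → (A u v ↔ ¬ A v u))
    (hcard : Fintype.card V = 2 * k + 1)
    (hreg : ∀ v, outDeg A v = k) :
    ¬ ∃ P : Fin (2 * k) → Set V,
        Pairwise (fun i j => Disjoint (P i) (P j)) ∧
        (⋃ i, P i) = Set.univ ∧
        ∀ i, ∀ v ∈ P i, outDegOn A (P i) v ≤ outDeg A v - k := by
  rintro ⟨P, hdisj, hcover, hred⟩
  -- each part is a subsingleton
  have hsub : ∀ i, ∀ u ∈ P i, ∀ v ∈ P i, u = v := by
    intro i u hu v hv
    by_contra hne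
    -- one of A u v, A v u holds
    have harc : A u v ∨ A v u := by
      by_cases h : A u v
      · exact Or.inl h
      · exact Or.inr (((htour v u (Ne.symm hne)).mpr) h)
    have key : ∀ a b : V, a ∈ P i → b ∈ P i → A a b → False := by
      intro a b ha hb hab
      have h0 : outDegOn A (P i) a = 0 := by
        have := hred i a ha
        rw [hreg a] at this
        simpa using this
      have hmem : b ∈ {w | w ∈ P i ∧ A a w} := ⟨hb, hab⟩
      have : {w | w ∈ P i ∧ A a w} = (∅ : Set V) := by
        have hfin : {w | w ∈ P i ∧ A a w}.Finite := Set.toFinite _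
        exact (Set.ncard_eq_zero hfin).mp h0
      rw [this] at hmem
      exact hmem
    rcases harc with h | h
    · exact key u v hu hv h
    · exact key v u hv hu h
  -- choose for each vertex an index of a part containing it
  have hmemall : ∀ v : V, ∃ i, v ∈ P i := by
    intro v
    have : v ∈ ⋃ i, P i := by rw [hcover]; trivial
    exact Set.mem_iUnion.mp this
  choose f hf using hmemall
  have hinj : Function.Injective f := by
    intro u v huv
    have hu : u ∈ P (f v) := huv ▸ hf u
    exact hsub (f v) u hu v (hf v)
  have := Fintype.card_le_of_injective f hinj
  simp [hcard, Fintype.card_fin] at this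
end
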